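/- Let A, B, C be cochain complexes over an additive category, and let α = (αⁿ : Aⁿ → Bⁿ⁺¹) and β = (βⁿ : Bⁿ → Cⁿ⁺¹) be 1-cochains in the Hom complexes HOM(A,B) and HOM(B,C). Then the following are equivalent: (i) there exists a family of morphisms hⁿ : Aⁿ → Cⁿ⁺¹ such that the degree-1 graded endomorphism of the graded object n ↦ Aⁿ ⊕ Bⁿ ⊕ Cⁿ with lower-triangular matrix (d_A, 0, 0; α, d_B, 0; −h, β, d_C) squares to zero, i.e. defines a cochain complex; (ii) δα = 0, δβ = 0, and the composite 2-cochain β∘α ∈ HOM(A,C) is a coboundary, namely β∘α = δ(h) for some 1-cochain h in HOM(A,C). In particular such a differential exists whenever α and β are cocycles and the degree-2 cohomology of the Hom complex HOM(A,C) vanishes. -/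
import Mathlib

open CategoryTheory CategoryTheory.Limits CochainComplex CochainComplex.HomComplex

/-- The degree `+1` graded endomorphism of the graded object `n ↦ Aⁿ ⊞ Bⁿ ⊞ Cⁿ` given by the
lower-triangular matrix `(d_A, 0, 0; α, d_B, 0; -h, β, d_C)`. -/
noncomputable def convD {C : Type*} [Category C] [Preadditive C] [HasBinaryBiproducts C]
    (A B K : CochainComplex C ℤ) (α : Cochain A B 1) (β : Cochain B K 1)
    (h : ∀ n : ℤ, A.X n ⟶ K.X (n + 1)) (n : ℤ) :
    A.X n ⊞ (B.X n ⊞ K.X n) ⟶ A.X (n + 1) ⊞ (B.X (n + 1) ⊞ K.X (n + 1)) :=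
  biprod.desc
    (biprod.lift (A.d n (n + 1)) (biprod.lift (α.v n (n + 1) rfl) (-(h n))))
    (biprod.desc
      (biprod.lift 0 (biprod.lift (B.d n (n + 1)) (β.v n (n + 1) rfl)))
      (biprod.lift 0 (biprod.lift 0 (K.d n (n + 1)))))

lemma convD_sq_zero_iff {C : Type*} [Category C] [Preadditive C] [HasBinaryBiproducts C]
    (A B K : CochainComplex C ℤ) (α : Cochain A B 1) (β : Cochain B K 1)
    (h : ∀ n : ℤ, A.X n ⟶ K.X (n + 1)) (n : ℤ) :
    convD A B K α β h n ≫ convD A B K α β h (n + 1) = 0 ↔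
    (A.d n (n+1) ≫ α.v (n+1) (n+1+1) rfl + α.v n (n+1) rfl ≫ B.d (n+1) (n+1+1) = 0 ∧
     B.d n (n+1) ≫ β.v (n+1) (n+1+1) rfl + β.v n (n+1) rfl ≫ K.d (n+1) (n+1+1) = 0 ∧
     α.v n (n+1) rfl ≫ β.v (n+1) (n+1+1) rfl =
       A.d n (n+1) ≫ h (n+1) + h n ≫ K.d (n+1) (n+1+1)) := by
  constructor
  · intro H
    refine ⟨?_, ?_, ?_⟩
    · have h1 := biprod.inl ≫= H =≫ (biprod.snd ≫ biprod.fst)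
      simpa [convD] using h1
    · have h1 := biprod.inl ≫= (biprod.inr ≫= H) =≫ (biprod.snd ≫ biprod.snd)
      simpa [convD] using h1
    · have h1 := biprod.inl ≫= H =≫ (biprod.snd ≫ biprod.snd)
      simp [convD] at h1
      rw [← sub_eq_zero, ← h1]
      abel
  · rintro ⟨h1, h2, h3⟩
    ext <;> simp [convD]
    · exact h1
    · rw [h3]
      abel
    · exact h2

lemma delta_one_zero_iff {C : Type*} [Category C] [Preadditive C]
    {A B : CochainComplex C ℤ} (γ : Cochain A B 1) :
    δ 1 2 γ = 0 ↔
      ∀ n : ℤ, A.d n (n+1) ≫ γ.v (n+1) (n+1+1) rfl + γ.v n (n+1) rfl ≫ B.d (n+1) (n+1+1) = 0 := by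
  constructor
  · intro H n
    have h0 : (δ 1 2 γ).v n (n+1+1) (by omega) = 0 := by rw [H]; simp
    rw [δ_v 1 2 rfl γ n (n+1+1) (by omega) (n+1) (n+1) (by omega) rfl] at h0
    simp only [Int.negOnePow_even 2 ⟨1, by norm_num⟩, one_smul] at h0
    rw [← h0]
    abel
  · intro H
    ext p q hpq
    obtain rfl : q = p + 1 + 1 := by omega
    rw [δ_v 1 2 rfl γ p (p+1+1) (by omega) (p+1) (p+1) (by omega) rfl]
    simp only [Int.negOnePow_even 2 ⟨1, by norm_num⟩, one_smul, Cochain.zero_v]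
    rw [← H p]
    abel

lemma delta_one_v {C : Type*} [Category C] [Preadditive C]
    {A K : CochainComplex C ℤ} (w : Cochain A K 1) (n : ℤ) :
    (δ 1 2 w).v n (n+1+1) (by omega) =
      w.v n (n+1) rfl ≫ K.d (n+1) (n+1+1) + A.d n (n+1) ≫ w.v (n+1) (n+1+1) rfl := by
  rw [δ_v 1 2 rfl w n (n+1+1) (by omega) (n+1) (n+1) (by omega) rfl]
  simp only [Int.negOnePow_even 2 ⟨1, by norm_num⟩, one_smul]

/-- A three-term convolution `(A → B → C)` with prescribed length-one components `α`, `β`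
exists if and only if `α` and `β` are cocycles and the composite `β∘α` is a coboundary in the
Hom complex `HOM(A,C)`; in particular it exists when `α`, `β` are cocycles and the degree `2`
cohomology of `HOM(A,C)` vanishes. -/
theorem threeTermConvolution_exists_iff
    {C : Type*} [Category C] [Preadditive C] [HasBinaryBiproducts C]
    (A B K : CochainComplex C ℤ) (α : Cochain A B 1) (β : Cochain B K 1) :
    ((∃ h : ∀ n : ℤ, A.X n ⟶ K.X (n + 1),
        ∀ n, convD A B K α β h n ≫ convD A B K α β h (n + 1) = 0) ↔
      (δ 1 2 α = 0 ∧ δ 1 2 β = 0 ∧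
        ∃ w : Cochain A K 1, α.comp β (by norm_num) = δ 1 2 w)) ∧
    (δ 1 2 α = 0 → δ 1 2 β = 0 →
      (∀ z : Cochain A K 2, δ 2 3 z = 0 → ∃ w : Cochain A K 1, z = δ 1 2 w) →
      ∃ h : ∀ n : ℤ, A.X n ⟶ K.X (n + 1),
        ∀ n, convD A B K α β h n ≫ convD A B K α β h (n + 1) = 0) := by
  have main : (∃ h : ∀ n : ℤ, A.X n ⟶ K.X (n + 1),
        ∀ n, convD A B K α β h n ≫ convD A B K α β h (n + 1) = 0) ↔
      (δ 1 2 α = 0 ∧ δ 1 2 β = 0 ∧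
        ∃ w : Cochain A K 1, α.comp β (by norm_num) = δ 1 2 w) := by
    constructor
    · rintro ⟨h, H⟩
      have key := fun n => (convD_sq_zero_iff A B K α β h n).mp (H n)
      refine ⟨(delta_one_zero_iff α).mpr (fun n => (key n).1),
        (delta_one_zero_iff β).mpr (fun n => (key n).2.1),
        Cochain.mk (fun p q hpq => h p ≫ (K.XIsoOfEq hpq).hom), ?_⟩
      ext p q hpq
      obtain rfl : q = p + 1 + 1 := by omega
      rw [Cochain.comp_v α β (by norm_num) p (p+1) (p+1+1) rfl rfl,
        delta_one_v, (key p).2.2]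
      simp [Cochain.mk_v]
      abel
    · rintro ⟨hα, hβ, w, hw⟩
      refine ⟨fun n => w.v n (n+1) rfl, fun n => ?_⟩
      rw [convD_sq_zero_iff]
      refine ⟨(delta_one_zero_iff α).mp hα n, (delta_one_zero_iff β).mp hβ n, ?_⟩
      have := Cochain.congr_v hw n (n+1+1) (by omega)
      rw [Cochain.comp_v α β (by norm_num) n (n+1) (n+1+1) rfl rfl, delta_one_v] at this
      rw [this]
      abel
  refine ⟨main, fun hα hβ hvanish => ?_⟩
  rw [main]
  refine ⟨hα, hβ, hvanish _ ?_⟩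
  rw [δ_comp α β (by norm_num) 2 2 3 rfl rfl rfl, hα, hβ]
  simp
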